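/- arXiv:2511.07248 — 9 statements merged into one kernel-verified Lean document; each statement's English description precedes it below -/
import Mathlib

section
/- If A ⊆ V(G) is a set maximizing the number of external private neighbors (an EPN(G)-set), then there exists a subset B ⊆ A which is also an EPN(G)-set and is open irredundant, i.e., every vertex of B has an external private neighbor with respect to B. -/
open Finset

variable {V : Type*}

/-- Number of external private neighbors with respect to `U`. -/
noncomputable def extCount (G : SimpleGraph V) (U : Finset V) : ℕ :=
  Nat.card {w : V // w ∉ U ∧ Nat.card {v : V // v ∈ U ∧ G.Adj w v} = 1}

/-- Number of internal private neighbors with respect to `U`. -/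
noncomputable def intCount (G : SimpleGraph V) (U : Finset V) : ℕ :=
  Nat.card {w : V // w ∈ U ∧ Nat.card {v : V // v ∈ U ∧ G.Adj w v} = 1}

/-- Number of self private neighbors with respect to `U`. -/
noncomputable def selfCount (G : SimpleGraph V) (U : Finset V) : ℕ :=
  Nat.card {w : V // w ∈ U ∧ ∀ v ∈ U, ¬ G.Adj w v}

/-- `EPN G`: maximum number of external private neighbors over all vertex subsets. -/
noncomputable def EPN [Fintype V] [DecidableEq V] (G : SimpleGraph V) : ℕ :=
  (univ : Finset (Finset V)).sup fun U => extCount G U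

lemma extCount_le_extCount_erase [Fintype V] [DecidableEq V] (G : SimpleGraph V)
    (B : Finset V) (v : V) (hv : v ∈ B)
    (h : ¬ ∃ w : V, w ∉ B ∧ G.Adj v w ∧ ∀ u ∈ B, G.Adj w u → u = v) :
    extCount G B ≤ extCount G (B.erase v) := by
  have key : ∀ w : V, w ∉ B → Nat.card {u : V // u ∈ B ∧ G.Adj w u} = 1 →
      w ∉ B.erase v ∧ Nat.card {u : V // u ∈ B.erase v ∧ G.Adj w u} = 1 := by
    intro w hw hcard
    obtain ⟨⟨u, huB, huadj⟩, huniq⟩ := Nat.card_eq_one_iff_exists.mp hcard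
    have huv : u ≠ v := by
      rintro rfl
      exact h ⟨w, hw, huadj.symm,
        fun u' hu' ha' => congrArg Subtype.val (huniq ⟨u', hu', ha'⟩)⟩
    refine ⟨fun hc => hw (Finset.mem_of_mem_erase hc),
      Nat.card_eq_one_iff_exists.mpr
        ⟨⟨u, Finset.mem_erase.mpr ⟨huv, huB⟩, huadj⟩, ?_⟩⟩
    rintro ⟨y, hy, hya⟩
    have hy' : y = u := congrArg Subtype.val (huniq ⟨y, Finset.mem_of_mem_erase hy, hya⟩)
    exact Subtype.ext hy'
  unfold extCount
  apply Nat.card_le_card_of_injective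
    (fun x : {w : V // w ∉ B ∧ Nat.card {u : V // u ∈ B ∧ G.Adj w u} = 1} =>
      (⟨x.1, (key x.1 x.2.1 x.2.2).1, (key x.1 x.2.1 x.2.2).2⟩ :
        {w : V // w ∉ B.erase v ∧ Nat.card {u : V // u ∈ B.erase v ∧ G.Adj w u} = 1}))
  intro a b hab
  simpa [Subtype.ext_iff] using hab

theorem exists_openIrredundant_EPN_set [Fintype V] [DecidableEq V] (G : SimpleGraph V)
    (A : Finset V) (hA : extCount G A = EPN G) :
    ∃ B ⊆ A, extCount G B = EPN G ∧
      ∀ v ∈ B, ∃ w : V, w ∉ B ∧ G.Adj v w ∧ ∀ u ∈ B, G.Adj w u → u = v := by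
  classical
  set S := (A.powerset).filter (fun B => extCount G B = EPN G) with hS
  have hAS : A ∈ S := mem_filter.mpr ⟨mem_powerset_self A, hA⟩
  obtain ⟨B, hBS, hmin⟩ := S.exists_min_image Finset.card ⟨A, hAS⟩
  obtain ⟨hBA, hBepn⟩ := mem_filter.mp hBS
  refine ⟨B, mem_powerset.mp hBA, hBepn, ?_⟩
  intro v hv
  by_contra hcon
  have hle := extCount_le_extCount_erase G B v hv hcon
  have hle2 : extCount G (B.erase v) ≤ EPN G :=
    Finset.le_sup (mem_univ (B.erase v))
  have heq : extCount G (B.erase v) = EPN G :=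
    le_antisymm hle2 (hBepn ▸ hle)
  have hmem : B.erase v ∈ S := mem_filter.mpr
    ⟨mem_powerset.mpr ((erase_subset _ _).trans (mem_powerset.mp hBA)), heq⟩
  have h1 := hmin _ hmem
  have h2 := Finset.card_erase_of_mem hv
  have hpos := Finset.card_pos.mpr ⟨v, hv⟩
  omega
end

section
/- If A ⊆ V(G) maximizes the sum of the numbers of external and self private neighbors (an ESPN(G)-set), then there is a subset B ⊆ A which is also an ESPN(G)-set and is irredundant, i.e., every vertex of B is a self private neighbor or has an external private neighbor with respect to B. -/
open Finset

variable {V : Type*}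

/-- `ESPN G`: maximum combined number of external and self private neighbors. -/
noncomputable def ESPN [Fintype V] [DecidableEq V] (G : SimpleGraph V) : ℕ :=
  (univ : Finset (Finset V)).sup fun U => extCount G U + selfCount G U

open scoped Classical

lemma card_adj [Fintype V] [DecidableEq V] (G : SimpleGraph V) (U : Finset V) (w : V) :
    Nat.card {v : V // v ∈ U ∧ G.Adj w v} = (U.filter fun v => G.Adj w v).card := by
  rw [Nat.card_eq_fintype_card, Fintype.card_subtype]
  congr 1
  ext v
  simp

lemma ncard_ext (G : SimpleGraph V) (U : Finset V) :
    extCount G U = Set.ncard {w : V | w ∉ U ∧ Nat.card {v : V // v ∈ U ∧ G.Adj w v} = 1} := rfl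

lemma ncard_self (G : SimpleGraph V) (U : Finset V) :
    selfCount G U = Set.ncard {w : V | w ∈ U ∧ ∀ v ∈ U, ¬ G.Adj w v} := rfl

lemma key_le [Fintype V] [DecidableEq V] (G : SimpleGraph V) (B : Finset V) (v : V)
    (hv : v ∈ B) (hadj : ∃ u ∈ B, G.Adj v u)
    (hno : ∀ w, w ∉ B → G.Adj v w → ∃ u ∈ B, G.Adj w u ∧ u ≠ v) :
    extCount G B + selfCount G B ≤ extCount G (B.erase v) + selfCount G (B.erase v) := by
  have hext : extCount G B ≤ extCount G (B.erase v) := by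
    rw [ncard_ext, ncard_ext]
    refine Set.ncard_le_ncard ?_ (Set.toFinite _)
    rintro w ⟨hwB, hcard⟩
    rw [card_adj] at hcard
    obtain ⟨u₀, hu₀⟩ := Finset.card_eq_one.mp hcard
    have hu₀mem : u₀ ∈ B ∧ G.Adj w u₀ := by
      have := hu₀ ▸ Finset.mem_singleton_self u₀
      simpa using this
    have hwv : ¬ G.Adj w v := by
      intro hadjwv
      obtain ⟨u, huB, hwu, huv⟩ := hno w hwB hadjwv.symm
      have h1 : u ∈ B.filter fun x => G.Adj w x := by simp [huB, hwu]
      have h2 : v ∈ B.filter fun x => G.Adj w x := by simp [hv, hadjwv]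
      rw [hu₀] at h1 h2
      exact huv ((Finset.mem_singleton.mp h1).trans (Finset.mem_singleton.mp h2).symm)
    constructor
    · intro h; exact hwB (Finset.mem_of_mem_erase h)
    · rw [card_adj]
      have : ((B.erase v).filter fun x => G.Adj w x) = B.filter fun x => G.Adj w x := by
        ext a
        simp only [Finset.mem_filter, Finset.mem_erase]
        constructor
        · rintro ⟨⟨_, ha⟩, h⟩; exact ⟨ha, h⟩
        · rintro ⟨ha, h⟩
          refine ⟨⟨?_, ha⟩, h⟩
          rintro rfl; exact hwv h
      rw [this, hcard]
  have hself : selfCount G B ≤ selfCount G (B.erase v) := by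
    rw [ncard_self, ncard_self]
    refine Set.ncard_le_ncard ?_ (Set.toFinite _)
    rintro w ⟨hwB, hnone⟩
    have hwv : w ≠ v := by
      rintro rfl
      obtain ⟨u, huB, hvu⟩ := hadj
      exact hnone u huB hvu
    exact ⟨Finset.mem_erase.mpr ⟨hwv, hwB⟩, fun u hu => hnone u (Finset.mem_of_mem_erase hu)⟩
  omega

theorem exists_irredundant_ESPN_set' [Fintype V] [DecidableEq V] (G : SimpleGraph V)
    (A : Finset V)
    (E : ℕ) (hE : E = (univ : Finset (Finset V)).sup fun U => extCount G U + selfCount G U)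
    (hA : extCount G A + selfCount G A = E) :
    ∃ B ⊆ A, extCount G B + selfCount G B = E ∧
      ∀ v ∈ B, (∀ u ∈ B, ¬ G.Adj v u) ∨
        ∃ w : V, w ∉ B ∧ G.Adj v w ∧ ∀ u ∈ B, G.Adj w u → u = v := by
  have hne : (A.powerset.filter fun B => extCount G B + selfCount G B = E).Nonempty :=
    ⟨A, by simp [hA]⟩
  obtain ⟨B, hBmem, hBmin⟩ := Finset.exists_min_image _ Finset.card hne
  rw [Finset.mem_filter, Finset.mem_powerset] at hBmem
  refine ⟨B, hBmem.1, hBmem.2, ?_⟩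
  intro v hv
  by_contra hcon
  push_neg at hcon
  obtain ⟨⟨u, hu, huv⟩, hno⟩ := hcon
  have hno' : ∀ w, w ∉ B → G.Adj v w → ∃ u ∈ B, G.Adj w u ∧ u ≠ v := by
    intro w hw hvw
    exact hno w hw hvw
  have hkey := key_le G B v hv ⟨u, hu, huv⟩ hno'
  have hle : extCount G (B.erase v) + selfCount G (B.erase v) ≤ E := by
    rw [hE]
    exact Finset.le_sup (f := fun U => extCount G U + selfCount G U) (Finset.mem_univ _)
  have heq : extCount G (B.erase v) + selfCount G (B.erase v) = E := by omega
  have hmem' : B.erase v ∈ A.powerset.filter fun C => extCount G C + selfCount G C = E := by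
    rw [Finset.mem_filter, Finset.mem_powerset]
    exact ⟨(Finset.erase_subset _ _).trans hBmem.1, heq⟩
  have := hBmin _ hmem'
  have hlt : (B.erase v).card < B.card := Finset.card_erase_lt_of_mem hv
  omega

theorem exists_irredundant_ESPN_set [Fintype V] [DecidableEq V] (G : SimpleGraph V)
    (A : Finset V) (hA : extCount G A + selfCount G A = ESPN G) :
    ∃ B ⊆ A, extCount G B + selfCount G B = ESPN G ∧
      ∀ v ∈ B, (∀ u ∈ B, ¬ G.Adj v u) ∨
        ∃ w : V, w ∉ B ∧ G.Adj v w ∧ ∀ u ∈ B, G.Adj w u → u = v := by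
  exact exists_irredundant_ESPN_set' G A (ESPN G) rfl hA
end

section
/- If A ⊆ V(G) maximizes the sum of the numbers of external and internal private neighbors (an EIPN(G)-set), then there is a subset B ⊆ A which is also an EIPN(G)-set and is open-open irredundant, i.e., every vertex of B has an external or internal private neighbor with respect to B. -/
open Finset

variable {V : Type*}

/-- `EIPN G`: maximum combined number of external and internal private neighbors. -/
noncomputable def EIPN [Fintype V] [DecidableEq V] (G : SimpleGraph V) : ℕ :=
  (univ : Finset (Finset V)).sup fun U => extCount G U + intCount G U

section
variable [Fintype V] [DecidableEq V] (G : SimpleGraph V)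

open Classical in
lemma natcard_inner (U : Finset V) (w : V) :
    Nat.card {v : V // v ∈ U ∧ G.Adj w v} = (U.filter (fun v => G.Adj w v)).card := by
  rw [Nat.card_eq_fintype_card, Fintype.card_subtype]
  congr 1
  ext v; simp [and_comm]

open Classical in
lemma sum_eq (U : Finset V) :
    extCount G U + intCount G U
      = (univ.filter fun w => (U.filter (fun v => G.Adj w v)).card = 1).card := by
  rw [extCount, intCount]
  simp only [natcard_inner]
  rw [Nat.card_eq_fintype_card, Nat.card_eq_fintype_card, Fintype.card_subtype,
    Fintype.card_subtype]
  rw [← Finset.card_filter_add_card_filter_not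
    (s := univ.filter fun w => (U.filter (fun v => G.Adj w v)).card = 1) (p := fun w => w ∉ U)]
  congr 1 <;> · congr 1; ext w; simp; tauto

open Classical in
lemma erase_ge (B : Finset V) (v : V) (hv : v ∈ B)
    (h : ∀ w : V, G.Adj v w → ∃ u ∈ B, u ≠ v ∧ G.Adj w u) :
    extCount G B + intCount G B ≤ extCount G (B.erase v) + intCount G (B.erase v) := by
  rw [sum_eq, sum_eq]
  apply Finset.card_le_card
  intro w hw
  simp only [mem_filter, mem_univ, true_and] at hw ⊢
  have hnadj : ¬ G.Adj w v := by
    intro hadj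
    obtain ⟨u, huB, huv, hwu⟩ := h w hadj.symm
    have : ({u, v} : Finset V) ⊆ B.filter (fun x => G.Adj w x) := by
      intro x hx
      simp at hx
      rcases hx with rfl | rfl <;> simp [huB, hv, hwu, hadj]
    have := Finset.card_le_card this
    rw [hw, Finset.card_insert_of_notMem (by simp [huv]), Finset.card_singleton] at this
    omega
  rw [← hw]
  congr 1
  ext x
  simp only [mem_filter, mem_erase]
  constructor
  · rintro ⟨⟨-, hx⟩, ha⟩; exact ⟨hx, ha⟩
  · rintro ⟨hx, ha⟩
    refine ⟨⟨?_, hx⟩, ha⟩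
    rintro rfl; exact hnadj ha

lemma aux (n : ℕ) : ∀ B : Finset V, B.card ≤ n →
    extCount G B + intCount G B = EIPN G →
    ∃ C ⊆ B, extCount G C + intCount G C = EIPN G ∧
      ∀ v ∈ C, ∃ w : V, G.Adj v w ∧ ∀ u ∈ C, u ≠ v → ¬ G.Adj w u := by
  induction n with
  | zero =>
    intro B hB hE
    exact ⟨B, Finset.Subset.refl _, hE, by simp [Finset.card_eq_zero.mp (Nat.le_zero.mp hB)]⟩
  | succ n ih =>
    intro B hB hE
    by_cases hgood : ∀ v ∈ B, ∃ w : V, G.Adj v w ∧ ∀ u ∈ B, u ≠ v → ¬ G.Adj w u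
    · exact ⟨B, Finset.Subset.refl _, hE, hgood⟩
    · push_neg at hgood
      obtain ⟨v, hv, hbad⟩ := hgood
      have h : ∀ w : V, G.Adj v w → ∃ u ∈ B, u ≠ v ∧ G.Adj w u := by
        intro w hw
        obtain ⟨u, huB, huv, hadj⟩ := hbad w hw
        exact ⟨u, huB, huv, hadj⟩
      have hle := erase_ge G B v hv h
      have hub : extCount G (B.erase v) + intCount G (B.erase v) ≤ EIPN G :=
        Finset.le_sup (f := fun U => extCount G U + intCount G U) (mem_univ _)
      have hE' : extCount G (B.erase v) + intCount G (B.erase v) = EIPN G := by omega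
      have hcard : (B.erase v).card ≤ n := by
        have := Finset.card_erase_of_mem hv
        omega
      obtain ⟨C, hCB, hCE, hCirr⟩ := ih (B.erase v) hcard hE'
      exact ⟨C, hCB.trans (Finset.erase_subset _ _), hCE, hCirr⟩

end

theorem exists_openOpenIrredundant_EIPN_set [Fintype V] [DecidableEq V] (G : SimpleGraph V)
    (A : Finset V) (hA : extCount G A + intCount G A = EIPN G) :
    ∃ B ⊆ A, extCount G B + intCount G B = EIPN G ∧
      ∀ v ∈ B, ∃ w : V, G.Adj v w ∧ ∀ u ∈ B, u ≠ v → ¬ G.Adj w u :=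
  aux G A.card A le_rfl hA
end

section
/- If A ⊆ V(G) maximizes the total number of external, internal, and self private neighbors (an EISPN(G)-set), then there is a subset B ⊆ A which is also an EISPN(G)-set and is closed-open irredundant, i.e., for every v ∈ B, N[v] − N(B − {v}) ≠ ∅. -/
open Finset

variable {V : Type*}

/-- `EISPN G`: maximum combined number of external, internal and self private neighbors. -/
noncomputable def EISPN [Fintype V] [DecidableEq V] (G : SimpleGraph V) : ℕ :=
  (univ : Finset (Finset V)).sup fun U => extCount G U + intCount G U + selfCount G U

open scoped Classical

/-- degree of `w` into `U` -/
noncomputable def Dg (G : SimpleGraph V) (w : V) (U : Finset V) : ℕ :=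
  (U.filter (fun v => G.Adj w v)).card

lemma natcard_eq_Dg [Fintype V] (G : SimpleGraph V) (w : V) (U : Finset V) :
    Nat.card {v : V // v ∈ U ∧ G.Adj w v} = Dg G w U := by
  rw [Nat.card_eq_fintype_card, Fintype.card_subtype, Dg]
  congr 1
  ext x
  simp

/-- the set of counted vertices -/
noncomputable def Cset [Fintype V] (G : SimpleGraph V) (U : Finset V) : Finset V :=
  univ.filter (fun w => (w ∈ U ∧ Dg G w U ≤ 1) ∨ (w ∉ U ∧ Dg G w U = 1))

set_option linter.unnecessarySeqFocus false in
lemma total_eq [Fintype V] (G : SimpleGraph V) (U : Finset V) :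
    extCount G U + intCount G U + selfCount G U = (Cset G U).card := by
  have he : extCount G U = (univ.filter (fun w => w ∉ U ∧ Dg G w U = 1)).card := by
    rw [extCount]
    simp only [natcard_eq_Dg]
    rw [Nat.card_eq_fintype_card, Fintype.card_subtype]
  have hi : intCount G U = (univ.filter (fun w => w ∈ U ∧ Dg G w U = 1)).card := by
    rw [intCount]
    simp only [natcard_eq_Dg]
    rw [Nat.card_eq_fintype_card, Fintype.card_subtype]
  have hs : selfCount G U = (univ.filter (fun w => w ∈ U ∧ Dg G w U = 0)).card := by
    rw [selfCount]
    rw [Nat.card_eq_fintype_card, Fintype.card_subtype]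
    congr 1; ext x
    simp only [Dg, Finset.card_eq_zero, Finset.filter_eq_empty_iff]
  have hd1 : Disjoint (univ.filter (fun w => w ∉ U ∧ Dg G w U = 1))
      (univ.filter (fun w => w ∈ U ∧ Dg G w U = 1)) := by
    simp only [Finset.disjoint_left, mem_filter]
    rintro a ⟨_, h1, _⟩ ⟨_, h2, _⟩; exact h1 h2
  have hd2 : Disjoint ((univ.filter (fun w => w ∉ U ∧ Dg G w U = 1)) ∪
      (univ.filter (fun w => w ∈ U ∧ Dg G w U = 1)))
      (univ.filter (fun w => w ∈ U ∧ Dg G w U = 0)) := by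
    simp only [Finset.disjoint_left, mem_filter, Finset.mem_union]
    rintro a (⟨_, h1, h2⟩ | ⟨_, h1, h2⟩) ⟨_, h3, h4⟩
    · exact h1 h3
    · omega
  have hC : Cset G U = ((univ.filter (fun w => w ∉ U ∧ Dg G w U = 1)) ∪
      (univ.filter (fun w => w ∈ U ∧ Dg G w U = 1))) ∪
      (univ.filter (fun w => w ∈ U ∧ Dg G w U = 0)) := by
    ext x
    simp only [Cset, mem_filter, Finset.mem_union, mem_univ, true_and]
    by_cases hx : x ∈ U <;> simp [hx] <;> omega
  rw [he, hi, hs, hC, Finset.card_union_of_disjoint hd2, Finset.card_union_of_disjoint hd1]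

lemma f_le_EISPN [Fintype V] [DecidableEq V] (G : SimpleGraph V) (U : Finset V) :
    extCount G U + intCount G U + selfCount G U ≤ EISPN G :=
  Finset.le_sup (f := fun U => extCount G U + intCount G U + selfCount G U) (mem_univ U)

lemma Cset_subset_erase [Fintype V] [DecidableEq V] (G : SimpleGraph V) (B : Finset V) (v : V)
    (hv : v ∈ B) (h : ∀ w, (w = v ∨ G.Adj v w) → ∃ u ∈ B, u ≠ v ∧ G.Adj w u) :
    Cset G B ⊆ Cset G (B.erase v) := by
  intro w hw
  simp only [Cset, mem_filter] at hw ⊢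
  refine ⟨mem_univ _, ?_⟩
  by_cases hwv : w = v
  · subst hwv
    obtain ⟨u, hu, huv, hadj⟩ := h w (Or.inl rfl)
    have hfil : (B.erase w).filter (fun x => G.Adj w x) = B.filter (fun x => G.Adj w x) := by
      rw [Finset.filter_erase, Finset.erase_eq_of_notMem]
      simp [G.irrefl]
    have h1 : 1 ≤ Dg G w B := by
      rw [Dg]
      exact Finset.card_pos.mpr ⟨u, Finset.mem_filter.mpr ⟨hu, hadj⟩⟩
    have hle : Dg G w B ≤ 1 := by
      rcases hw.2 with ⟨_, h2⟩ | ⟨h2, _⟩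
      · exact h2
      · exact absurd hv h2
    refine Or.inr ⟨Finset.notMem_erase _ _, ?_⟩
    have hDe : Dg G w (B.erase w) = Dg G w B := by rw [Dg, Dg, hfil]
    omega
  · by_cases hadj : G.Adj w v
    · exfalso
      obtain ⟨u, hu, huv, hadju⟩ := h w (Or.inr (G.adj_symm hadj))
      have h2 : 1 < Dg G w B := by
        rw [Dg, Finset.one_lt_card]
        exact ⟨v, Finset.mem_filter.mpr ⟨hv, hadj⟩, u, Finset.mem_filter.mpr ⟨hu, hadju⟩,
          fun e => huv e.symm⟩
      rcases hw.2 with ⟨_, hle⟩ | ⟨_, heq⟩ <;> omega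
    · have hfil : (B.erase v).filter (fun x => G.Adj w x) = B.filter (fun x => G.Adj w x) := by
        rw [Finset.filter_erase, Finset.erase_eq_of_notMem]
        simp [hadj]
      have hDg : Dg G w (B.erase v) = Dg G w B := by rw [Dg, Dg, hfil]
      have hmem : w ∈ B.erase v ↔ w ∈ B := by
        rw [Finset.mem_erase]; exact ⟨fun h => h.2, fun h => ⟨hwv, h⟩⟩
      rcases hw.2 with ⟨h1, h2⟩ | ⟨h1, h2⟩
      · exact Or.inl ⟨hmem.mpr h1, hDg ▸ h2⟩
      · exact Or.inr ⟨fun hm => h1 (hmem.mp hm), hDg ▸ h2⟩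

lemma aux_step [Fintype V] [DecidableEq V] (G : SimpleGraph V) :
    ∀ n (B : Finset V), B.card ≤ n →
      extCount G B + intCount G B + selfCount G B = EISPN G →
      ∃ C ⊆ B, extCount G C + intCount G C + selfCount G C = EISPN G ∧
        ∀ v ∈ C, ∃ w : V, (w = v ∨ G.Adj v w) ∧ ∀ u ∈ C, u ≠ v → ¬ G.Adj w u := by
  intro n
  induction n with
  | zero =>
      intro B hcard hB
      refine ⟨B, subset_rfl, hB, ?_⟩
      have : B = ∅ := Finset.card_eq_zero.mp (Nat.le_zero.mp hcard)
      simp [this]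
  | succ n ih =>
      intro B hcard hB
      by_cases hirr : ∀ v ∈ B, ∃ w : V, (w = v ∨ G.Adj v w) ∧ ∀ u ∈ B, u ≠ v → ¬ G.Adj w u
      · exact ⟨B, subset_rfl, hB, hirr⟩
      · push_neg at hirr
        obtain ⟨v, hv, hred⟩ := hirr
        have hred' : ∀ w, (w = v ∨ G.Adj v w) → ∃ u ∈ B, u ≠ v ∧ G.Adj w u := by
          intro w hw
          rcases hred w hw with ⟨u, hu, huv, hadj⟩
          exact ⟨u, hu, huv, hadj⟩
        have hle : extCount G B + intCount G B + selfCount G B ≤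
            extCount G (B.erase v) + intCount G (B.erase v) + selfCount G (B.erase v) := by
          rw [total_eq, total_eq]
          exact Finset.card_le_card (Cset_subset_erase G B v hv hred')
        have heq : extCount G (B.erase v) + intCount G (B.erase v) + selfCount G (B.erase v)
            = EISPN G := le_antisymm (f_le_EISPN G _) (hB ▸ hle)
        have hc : (B.erase v).card ≤ n := by
          have := Finset.card_erase_of_mem hv
          omega
        obtain ⟨C, hCsub, hC⟩ := ih (B.erase v) hc heq
        exact ⟨C, hCsub.trans (Finset.erase_subset _ _), hC⟩

theorem exists_closedOpenIrredundant_EISPN_set [Fintype V] [DecidableEq V] (G : SimpleGraph V)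
    (A : Finset V) (hA : extCount G A + intCount G A + selfCount G A = EISPN G) :
    ∃ B ⊆ A, extCount G B + intCount G B + selfCount G B = EISPN G ∧
      ∀ v ∈ B, ∃ w : V, (w = v ∨ G.Adj v w) ∧ ∀ u ∈ B, u ≠ v → ¬ G.Adj w u :=
  aux_step G A.card A le_rfl hA
end

section
/- For the path P_n on n ≥ 2 vertices, IPN(P_n) = 2⌈(n−1)/3⌉. -/
open Finset

variable {V : Type*}

/-- `IPN G`: maximum number of internal private neighbors over all vertex subsets. -/
noncomputable def IPN [Fintype V] [DecidableEq V] (G : SimpleGraph V) : ℕ :=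
  (univ : Finset (Finset V)).sup fun U => intCount G U

/-- The path graph on vertices `{0, …, n-1}` with edges between consecutive numbers. -/
def myPath (n : ℕ) : SimpleGraph (Fin n) :=
  SimpleGraph.fromRel (fun i j => (i : ℕ) + 1 = (j : ℕ))

/-! ### Auxiliary machinery -/

/-- Neighbors of `w` inside `U` in the path graph, as a concrete finset. -/
def nbr {n : ℕ} (U : Finset (Fin n)) (w : Fin n) : Finset (Fin n) :=
  U.filter (fun v => (v:ℕ)+1 = (w:ℕ) ∨ (w:ℕ)+1 = (v:ℕ))

/-- The set of internal private neighbors, as a concrete finset. -/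
def privSet {n : ℕ} (U : Finset (Fin n)) : Finset (Fin n) :=
  U.filter (fun w => (nbr U w).card = 1)

lemma myPath_adj {n : ℕ} (w v : Fin n) :
    (myPath n).Adj w v ↔ ((v:ℕ)+1 = (w:ℕ) ∨ (w:ℕ)+1 = (v:ℕ)) := by
  simp only [myPath, SimpleGraph.fromRel_adj]
  constructor
  · rintro ⟨-, h | h⟩ <;> omega
  · intro h
    refine ⟨fun hh => ?_, by omega⟩
    subst hh; omega

lemma intCount_eq {n : ℕ} (U : Finset (Fin n)) :
    intCount (myPath n) U = (privSet U).card := by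
  classical
  have hinner : ∀ w : Fin n,
      Nat.card {v : Fin n // v ∈ U ∧ (myPath n).Adj w v} = (nbr U w).card := by
    intro w
    rw [Nat.card_eq_fintype_card, Fintype.card_subtype]
    congr 1
    ext v
    simp [nbr, myPath_adj]
  rw [intCount, Nat.card_eq_fintype_card, Fintype.card_subtype]
  congr 1
  ext w
  simp [privSet, hinner]
  intro _
  rw [← Nat.card_eq_fintype_card, hinner w]

lemma nbr_card_le {n : ℕ} (U : Finset (Fin n)) (w : Fin n) : (nbr U w).card ≤ 2 := by
  have h : (nbr U w).card ≤ ({(w:ℕ)-1, (w:ℕ)+1} : Finset ℕ).card := by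
    refine card_le_card_of_injOn (fun v => (v:ℕ)) ?_ ?_
    · intro v hv
      simp only [nbr, mem_coe, mem_filter] at hv
      simp only [mem_coe, mem_insert, mem_singleton]
      omega
    · intro a _ b _ h
      exact Fin.val_injective h
  calc (nbr U w).card ≤ _ := h
    _ ≤ 2 := card_insert_le _ _ |>.trans (by simp)

/-- Handshake-style parity: the number of internal private neighbors is even. -/
lemma even_priv {n : ℕ} (U : Finset (Fin n)) : Even (privSet U).card := by
  classical
  let H : SimpleGraph (Fin n) :=
    { Adj := fun v w => v ∈ U ∧ w ∈ U ∧ ((v:ℕ)+1 = (w:ℕ) ∨ (w:ℕ)+1 = (v:ℕ))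
      symm := ⟨by intro a b h; tauto⟩
      loopless := ⟨by intro a h; omega⟩ }
  have hdeg : ∀ w : Fin n, w ∈ U → H.degree w = (nbr U w).card := by
    intro w hw
    rw [← SimpleGraph.card_neighborFinset_eq_degree]
    congr 1
    ext v
    simp only [SimpleGraph.mem_neighborFinset, nbr, mem_filter]
    constructor
    · rintro ⟨_, hv, h⟩; exact ⟨hv, by tauto⟩
    · rintro ⟨hv, h⟩; exact ⟨hw, hv, by tauto⟩
  have hdeg0 : ∀ w : Fin n, w ∉ U → H.degree w = 0 := by
    intro w hw
    rw [← SimpleGraph.card_neighborFinset_eq_degree]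
    simp only [card_eq_zero]
    ext v
    simp only [SimpleGraph.mem_neighborFinset, notMem_empty, iff_false]
    rintro ⟨h, -⟩; exact hw h
  have key := SimpleGraph.even_card_odd_degree_vertices H
  have : (univ.filter fun v => Odd (H.degree v)) = privSet U := by
    ext w
    simp only [mem_filter, mem_univ, true_and, privSet]
    by_cases hw : w ∈ U
    · rw [hdeg w hw]
      have := nbr_card_le U w
      rw [Nat.odd_iff]
      constructor
      · intro h; exact ⟨hw, by omega⟩
      · rintro ⟨-, h⟩; omega
    · rw [hdeg0 w hw]
      simp [hw]
  rwa [this] at key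

/-- The "outside position" (shifted by one) of a private vertex. -/
def extpos {n : ℕ} (U : Finset (Fin n)) (w : Fin n) : ℕ :=
  if ∃ v : Fin n, (w:ℕ)+1 = (v:ℕ) ∧ v ∈ U then (w:ℕ) else (w:ℕ)+2

lemma extpos_cases {n : ℕ} (U : Finset (Fin n)) (w : Fin n) :
    extpos U w = (w:ℕ) ∨ extpos U w = (w:ℕ)+2 := by
  unfold extpos; split <;> simp

lemma ext_notU {n : ℕ} {U : Finset (Fin n)} {w : Fin n} (hw : w ∈ privSet U)
    (v : Fin n) (hv : (v:ℕ)+1 = extpos U w) : v ∉ U := by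
  simp only [privSet, mem_filter] at hw
  obtain ⟨hwU, h1⟩ := hw
  unfold extpos at hv
  split at hv
  · next h =>
    obtain ⟨v', hv'1, hv'2⟩ := h
    intro hvU
    have hvmem : v ∈ nbr U w := by
      simp only [nbr, mem_filter]; exact ⟨hvU, Or.inl hv⟩
    have hv'mem : v' ∈ nbr U w := by
      simp only [nbr, mem_filter]; exact ⟨hv'2, Or.inr hv'1⟩
    have := card_le_one.mp (le_of_eq h1) v hvmem v' hv'mem
    have : (v:ℕ) = (v':ℕ) := congrArg Fin.val this
    omega
  · next h =>
    intro hvU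
    exact h ⟨v, by omega, hvU⟩

/-- The charging/discharging bound: `3 · |privSet U| ≤ 2n + 2`. -/
lemma charging {n : ℕ} (U : Finset (Fin n)) : 3 * (privSet U).card ≤ 2*n + 2 := by
  classical
  set D := privSet U with hD
  set c : ℕ → ℕ := fun j =>
    2 * (D.filter (fun w : Fin n => (w:ℕ)+1 = j)).card
      + (D.filter (fun w => extpos U w = j)).card
    with hc
  have hfib1 : D.card = ∑ j ∈ range (n+2), (D.filter (fun w : Fin n => (w:ℕ)+1 = j)).card :=
    card_eq_sum_card_fiberwise (f := fun w : Fin n => (w:ℕ)+1) (s := D) (t := range (n+2))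
      (fun w _ => mem_range.mpr (by show (w:ℕ)+1 < n+2; have := w.isLt; omega))
  have hfib2 : D.card = ∑ j ∈ range (n+2), (D.filter (fun w => extpos U w = j)).card :=
    card_eq_sum_card_fiberwise (f := fun w : Fin n => extpos U w) (s := D) (t := range (n+2))
      (fun w _ => mem_range.mpr (by
      show extpos U w < n+2
      have := w.isLt; rcases extpos_cases U w with h | h <;> omega))
  have hsum : 3 * D.card = ∑ j ∈ range (n+2), c j := by
    simp only [hc, sum_add_distrib, ← mul_sum, ← hfib1, ← hfib2]
    ring
  have hc0 : c 0 ≤ 1 := by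
    have h1 : (D.filter (fun w : Fin n => (w:ℕ)+1 = 0)) = ∅ := by
      apply filter_eq_empty_iff.mpr; intro w _; omega
    have h2 : (D.filter (fun w => extpos U w = 0)).card ≤ 1 := by
      apply card_le_one.mpr
      intro a ha b hb
      simp only [mem_filter] at ha hb
      apply Fin.ext
      rcases extpos_cases U a with h | h <;> rcases extpos_cases U b with h' | h' <;> omega
    simp only [hc, h1, card_empty, mul_zero, zero_add]
    exact h2
  have hclast : c (n+1) ≤ 1 := by
    have h1 : (D.filter (fun w : Fin n => (w:ℕ)+1 = n+1)) = ∅ := by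
      apply filter_eq_empty_iff.mpr; intro w _; have := w.isLt; omega
    have h2 : (D.filter (fun w => extpos U w = n+1)).card ≤ 1 := by
      apply card_le_one.mpr
      intro a ha b hb
      simp only [mem_filter] at ha hb
      apply Fin.ext
      have := a.isLt; have := b.isLt
      rcases extpos_cases U a with h | h <;> rcases extpos_cases U b with h' | h' <;> omega
    simp only [hc, h1, card_empty, mul_zero, zero_add]
    exact h2
  have hmid : ∀ j < n, c (j+1) ≤ 2 := by
    intro j hj
    by_cases hex : ∃ w₀ ∈ D, (w₀:ℕ)+1 = j+1
    · obtain ⟨w₀, hw₀D, hw₀⟩ := hex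
      have hw₀U : w₀ ∈ U := (mem_filter.mp hw₀D).1
      have h2 : (D.filter (fun w => extpos U w = j+1)) = ∅ := by
        apply filter_eq_empty_iff.mpr
        intro w hwD hew
        exact ext_notU hwD w₀ (by omega) hw₀U
      have h1 : (D.filter (fun w : Fin n => (w:ℕ)+1 = j+1)).card ≤ 1 := by
        apply card_le_one.mpr
        intro a ha b hb
        simp only [mem_filter] at ha hb
        apply Fin.ext; omega
      simp only [hc, h2, card_empty, add_zero]
      omega
    · have h1 : (D.filter (fun w : Fin n => (w:ℕ)+1 = j+1)) = ∅ := by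
        apply filter_eq_empty_iff.mpr
        intro w hwD hww
        exact hex ⟨w, hwD, hww⟩
      have h2 : (D.filter (fun w => extpos U w = j+1)).card ≤ 2 := by
        have hle : (D.filter (fun w => extpos U w = j+1)).card
            ≤ ({j+1, j-1} : Finset ℕ).card := by
          refine card_le_card_of_injOn (fun v => (v:ℕ)) ?_ ?_
          · intro w hw
            simp only [mem_coe, mem_filter] at hw
            simp only [mem_coe, mem_insert, mem_singleton]
            rcases extpos_cases U w with h | h <;> omega
          · intro a _ b _ h
            exact Fin.val_injective h
        calc _ ≤ _ := hle
          _ ≤ 2 := card_insert_le _ _ |>.trans (by simp)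
      simp only [hc, h1, card_empty, mul_zero, zero_add]
      exact h2
  have hmidsum : ∑ j ∈ range n, c (j+1) ≤ 2 * n := by
    calc ∑ j ∈ range n, c (j+1) ≤ ∑ _j ∈ range n, 2 :=
        sum_le_sum (fun j hj => hmid j (mem_range.mp hj))
      _ = 2 * n := by simp [mul_comm]
  have hsplit : ∑ j ∈ range (n+2), c j = c 0 + ∑ j ∈ range n, c (j+1) + c (n+1) := by
    rw [sum_range_succ, sum_range_succ']
    ring
  omega

/-! ### The extremal configuration -/

def lowerU (n : ℕ) : Finset (Fin n) :=
  univ.filter (fun i => (i:ℕ) % 3 ≠ 2 ∧ (i:ℕ) < 3*((n+1)/3))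

lemma lowerU_priv {n : ℕ} {w : Fin n} (hw : w ∈ lowerU n) :
    (nbr (lowerU n) w).card = 1 := by
  simp only [lowerU, mem_filter, mem_univ, true_and] at hw
  obtain ⟨hw3, hwlt⟩ := hw
  by_cases h0 : (w:ℕ) % 3 = 0
  · have htlt : (w:ℕ)+1 < n := by omega
    rw [card_eq_one]
    refine ⟨⟨(w:ℕ)+1, htlt⟩, ?_⟩
    ext v
    simp only [nbr, lowerU, mem_filter, mem_univ, true_and, mem_singleton, Fin.ext_iff]
    omega
  · have h1 : (w:ℕ) % 3 = 1 := by omega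
    rw [card_eq_one]
    refine ⟨⟨(w:ℕ)-1, by omega⟩, ?_⟩
    ext v
    simp only [nbr, lowerU, mem_filter, mem_univ, true_and, mem_singleton, Fin.ext_iff]
    omega

lemma count3 (m : ℕ) : ((range (3*m)).filter (fun a => a % 3 ≠ 2)).card = 2*m := by
  induction m with
  | zero => simp
  | succ m ih =>
    have h : 3*(m+1) = (3*m+1+1)+1 := by ring
    rw [h, range_add_one, range_add_one, range_add_one, filter_insert, filter_insert, filter_insert,
      if_neg (by omega), if_pos (by omega), if_pos (by omega),
      card_insert_of_notMem (by simp only [mem_insert, mem_filter, mem_range]; omega),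
      card_insert_of_notMem (by simp only [mem_filter, mem_range]; omega), ih]
    ring

lemma lowerU_card (n : ℕ) : (lowerU n).card = 2*((n+1)/3) := by
  have h1 : (lowerU n).card
      = ((range (3*((n+1)/3))).filter (fun a => a % 3 ≠ 2)).card := by
    apply card_bij (fun (v : Fin n) _ => (v:ℕ))
    · intro v hv
      simp only [lowerU, mem_filter, mem_univ, true_and] at hv
      simp only [mem_filter, mem_range]
      omega
    · intro a _ b _ h
      exact Fin.val_injective h
    · intro a ha
      simp only [mem_filter, mem_range] at ha
      have han : a < n := by omega
      exact ⟨⟨a, han⟩, by simp only [lowerU, mem_filter, mem_univ, true_and]; omega, rfl⟩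
  rw [h1, count3]

/-- `IPN(P_n) = 2⌈(n-1)/3⌉` for `n ≥ 2`; here `⌈(n-1)/3⌉ = (n+1)/3` in ℕ. -/
theorem IPN_path (n : ℕ) (hn : 2 ≤ n) : IPN (myPath n) = 2 * ((n - 1 + 2) / 3) := by
  have hrw : n - 1 + 2 = n + 1 := by omega
  rw [hrw]
  apply le_antisymm
  · apply Finset.sup_le
    intro U _
    rw [intCount_eq]
    have h1 := charging U
    obtain ⟨e, he⟩ := even_priv U
    omega
  · have hval : intCount (myPath n) (lowerU n) = 2 * ((n+1)/3) := by
      rw [intCount_eq]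
      have : privSet (lowerU n) = lowerU n :=
        filter_true_of_mem (fun w hw => lowerU_priv hw)
      rw [this, lowerU_card]
    calc 2 * ((n+1)/3) = intCount (myPath n) (lowerU n) := hval.symm
      _ ≤ IPN (myPath n) := Finset.le_sup (mem_univ _)
end

section
/- For the path P_n on n ≥ 2 vertices, EPN(P_n) = 2⌊n/3⌋ if n ≢ 2 (mod 3), and EPN(P_n) = 2⌊n/3⌋ + 1 if n ≡ 2 (mod 3). -/
open Finset

variable {V : Type*}

lemma natCard_subtype {n : ℕ} (p : Fin n → Prop) [DecidablePred p] :
    Nat.card {w : Fin n // p w} = (univ.filter p).card := by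
  rw [Nat.card_eq_fintype_card, Fintype.card_subtype]

lemma adj_iff {n : ℕ} {w v : Fin n} :
    (myPath n).Adj w v ↔ w ≠ v ∧ ((w:ℕ)+1 = v ∨ (v:ℕ)+1 = w) := by
  simp [myPath, SimpleGraph.fromRel_adj]

lemma countMod (r : ℕ) (hr : r < 3) (m : ℕ) :
    ((range m).filter (fun w => w % 3 = r)).card
      = m / 3 + if r < m % 3 then 1 else 0 := by
  induction m with
  | zero => simp
  | succ m ih =>
    rw [range_add_one, filter_insert]
    by_cases h : m % 3 = r
    · rw [if_pos h, card_insert_of_notMem (by simp), ih]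
      split_ifs <;> omega
    · rw [if_neg h, ih]
      split_ifs <;> omega

lemma card_filter_fin (n : ℕ) (q : ℕ → Prop) [DecidablePred q] :
    ((univ : Finset (Fin n)).filter (fun i : Fin n => q (i:ℕ))).card
      = ((range n).filter q).card := by
  refine Finset.card_bij (fun a _ => (a:ℕ)) ?_ ?_ ?_
  · intro a ha; simp at ha ⊢; exact ha
  · intro a _ b _ h; exact Fin.ext h
  · intro b hb; simp at hb; exact ⟨⟨b, hb.1⟩, by simp [hb.2], rfl⟩

open Classical in
lemma neighbors_card (n : ℕ) (u : Fin n) :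
    ((univ : Finset (Fin n)).filter (fun w => (myPath n).Adj w u)).card ≤ 2 := by
  classical
  have hu := u.isLt
  set a : Fin n := ⟨(u:ℕ)-1, by omega⟩ with ha
  by_cases h : (u:ℕ)+1 < n
  · have hsub : (univ : Finset (Fin n)).filter (fun w => (myPath n).Adj w u)
        ⊆ {a, ⟨(u:ℕ)+1, h⟩} := by
      intro w hw
      simp only [mem_filter, mem_univ, true_and, adj_iff, ne_eq, Fin.ext_iff] at hw
      simp only [mem_insert, mem_singleton, Fin.ext_iff, ha]
      omega
    calc _ ≤ ({a, ⟨(u:ℕ)+1, h⟩} : Finset (Fin n)).card := card_le_card hsub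
      _ ≤ 2 := (card_insert_le _ _).trans (by simp)
  · have hsub : (univ : Finset (Fin n)).filter (fun w => (myPath n).Adj w u)
        ⊆ {a} := by
      intro w hw
      have hw2 := w.isLt
      simp only [mem_filter, mem_univ, true_and, adj_iff, ne_eq, Fin.ext_iff] at hw
      simp only [mem_singleton, Fin.ext_iff, ha]
      omega
    calc _ ≤ ({a} : Finset (Fin n)).card := card_le_card hsub
      _ ≤ 2 := by simp

lemma ext_upper (n : ℕ) (U : Finset (Fin n)) :
    extCount (myPath n) U ≤ if n % 3 = 2 then 2 * (n / 3) + 1 else 2 * (n / 3) := by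
  classical
  set G := myPath n with hG
  have h0 : extCount G U
      = (univ.filter (fun w : Fin n => w ∉ U ∧ Nat.card {v : Fin n // v ∈ U ∧ G.Adj w v} = 1)).card := by
    rw [extCount, natCard_subtype]
  set E := univ.filter (fun w : Fin n => w ∉ U ∧ Nat.card {v : Fin n // v ∈ U ∧ G.Adj w v} = 1) with hE
  have hdisj : Disjoint E U := by
    rw [disjoint_left]
    intro w hw hwU
    rw [hE, mem_filter] at hw
    exact hw.2.1 hwU
  have ha : E.card + U.card ≤ n := by
    calc E.card + U.card = (E ∪ U).card := (card_union_of_disjoint hdisj).symm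
      _ ≤ (univ : Finset (Fin n)).card := card_le_card (subset_univ _)
      _ = n := by simp
  have hchoice : ∀ w ∈ E, ∃ u, u ∈ U ∧ G.Adj w u := by
    intro w hw
    rw [hE, mem_filter] at hw
    have h1 := hw.2.2
    rw [natCard_subtype] at h1
    obtain ⟨u, hu⟩ := card_eq_one.mp h1
    have h2 : u ∈ univ.filter (fun v => v ∈ U ∧ G.Adj w v) := hu ▸ mem_singleton_self u
    rw [mem_filter] at h2
    exact ⟨u, h2.2⟩
  set f : Fin n → Fin n := fun w =>
    if h : ∃ u, u ∈ U ∧ G.Adj w u then h.choose else w with hfdef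
  have hfU : ∀ w ∈ E, f w ∈ U ∧ G.Adj w (f w) := by
    intro w hw
    have h := hchoice w hw
    simp only [hfdef, dif_pos h]
    exact h.choose_spec
  have hb : E.card ≤ 2 * U.card := by
    refine card_le_mul_card_image_of_maps_to (f := f) (fun w hw => (hfU w hw).1) 2 ?_
    intro u hu
    calc (E.filter (fun w => f w = u)).card
        ≤ (univ.filter (fun w : Fin n => (myPath n).Adj w u)).card := by
          apply card_le_card
          intro w hw
          rw [mem_filter] at hw
          rw [mem_filter]
          refine ⟨mem_univ _, ?_⟩
          have := (hfU w hw.1).2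
          rwa [hw.2] at this
      _ ≤ 2 := neighbors_card n u
  rw [extCount] at h0 ⊢
  rw [h0]
  split_ifs <;> omega

lemma ext_lower (n : ℕ) :
    (if n % 3 = 2 then 2 * (n / 3) + 1 else 2 * (n / 3))
      ≤ extCount (myPath n) (univ.filter (fun i : Fin n => (i:ℕ) % 3 = 1)) := by
  classical
  set G := myPath n with hG
  set U : Finset (Fin n) := univ.filter (fun i : Fin n => (i:ℕ) % 3 = 1) with hU
  have hUmem : ∀ v : Fin n, v ∈ U ↔ (v:ℕ) % 3 = 1 := by
    intro v; simp [hU]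
  have hext : extCount G U
      = ((univ : Finset (Fin n)).filter
          (fun w : Fin n => (w:ℕ) % 3 = 2 ∨ ((w:ℕ) % 3 = 0 ∧ (w:ℕ)+1 < n))).card := by
    rw [extCount, natCard_subtype]
    congr 1
    apply filter_congr
    intro w _
    rw [natCard_subtype]
    have hwlt := w.isLt
    rcases (show (w:ℕ) % 3 = 0 ∨ (w:ℕ) % 3 = 1 ∨ (w:ℕ) % 3 = 2 by omega) with h3 | h3 | h3
    · by_cases hlt : (w:ℕ)+1 < n
      · apply iff_of_true
        · constructor
          · rw [hUmem]; omega
          · have : univ.filter (fun v => v ∈ U ∧ G.Adj w v) = {⟨(w:ℕ)+1, hlt⟩} := by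
              ext v
              have hvlt := v.isLt
              simp only [mem_filter, mem_univ, true_and, mem_singleton, hUmem, hG, adj_iff,
                ne_eq, Fin.ext_iff]
              omega
            rw [this, card_singleton]
        · omega
      · apply iff_of_false
        · intro hcon
          have : univ.filter (fun v => v ∈ U ∧ G.Adj w v) = (∅ : Finset (Fin n)) := by
            ext v
            have hvlt := v.isLt
            simp only [mem_filter, mem_univ, true_and, notMem_empty, iff_false, hUmem, hG,
              adj_iff, ne_eq, Fin.ext_iff, not_and, not_or]
            omega
          rw [this] at hcon
          simp at hcon
        · omega
    · apply iff_of_false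
      · intro hcon
        exact hcon.1 ((hUmem w).mpr h3)
      · omega
    · apply iff_of_true
      · constructor
        · rw [hUmem]; omega
        · have : univ.filter (fun v => v ∈ U ∧ G.Adj w v) = {⟨(w:ℕ)-1, by omega⟩} := by
            ext v
            have hvlt := v.isLt
            simp only [mem_filter, mem_univ, true_and, mem_singleton, hUmem, hG, adj_iff,
              ne_eq, Fin.ext_iff]
            omega
          rw [this, card_singleton]
      · omega
  rw [hext]
  rw [card_filter_fin n (fun w => w % 3 = 2 ∨ (w % 3 = 0 ∧ w + 1 < n))]
  rw [filter_or, card_union_of_disjoint]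
  · have h1 := countMod 2 (by omega) n
    have h2 : (range n).filter (fun w => w % 3 = 0 ∧ w + 1 < n)
        = (range (n-1)).filter (fun w => w % 3 = 0) := by
      ext a
      simp only [mem_filter, mem_range]
      omega
    rw [h1, h2, countMod 0 (by omega) (n-1)]
    split_ifs <;> omega
  · rw [disjoint_left]
    intro a haa hab
    rw [mem_filter] at haa hab
    omega

theorem EPN_path (n : ℕ) (hn : 2 ≤ n) :
    EPN (myPath n) = if n % 3 = 2 then 2 * (n / 3) + 1 else 2 * (n / 3) := by
  classical
  apply le_antisymm
  · exact Finset.sup_le fun U _ => ext_upper n U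
  · calc (if n % 3 = 2 then 2 * (n / 3) + 1 else 2 * (n / 3))
        ≤ extCount (myPath n) (univ.filter (fun i : Fin n => (i:ℕ) % 3 = 1)) := ext_lower n
      _ ≤ EPN (myPath n) := Finset.le_sup (mem_univ _)
end

section
/- For the cycle C_n on n ≥ 3 vertices, ESPN(C_n) = n if n ≡ 0 (mod 3), and ESPN(C_n) = n − 1 otherwise. -/
open Finset

variable {V : Type*}

/-- The cycle graph on `ZMod n`, with edges between consecutive residues. -/
def myCycle (n : ℕ) : SimpleGraph (ZMod n) :=
  SimpleGraph.fromRel (fun i j => i + 1 = j)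

section Aux

lemma myAdj_iff (n : ℕ) (hn : 3 ≤ n) (a b : ZMod n) :
    (myCycle n).Adj a b ↔ (a + 1 = b ∨ b + 1 = a) := by
  haveI : Fact (1 < n) := ⟨by omega⟩
  simp only [myCycle, SimpleGraph.fromRel_adj]
  constructor
  · rintro ⟨-, h⟩; exact h
  · rintro (h | h)
    · exact ⟨by rintro rfl; exact one_ne_zero (left_eq_add.mp h.symm), Or.inl h⟩
    · exact ⟨by rintro rfl; exact one_ne_zero (left_eq_add.mp h.symm), Or.inr h⟩

lemma my_sub_ne_add (n : ℕ) [NeZero n] (hn : 3 ≤ n) (w : ZMod n) : w - 1 ≠ w + 1 := by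
  intro h
  have h2 : (2 : ZMod n) = 0 := by linear_combination -h
  have := ZMod.val_cast_of_lt (show 2 < n by omega)
  rw [show ((2:ℕ) : ZMod n) = (2 : ZMod n) by push_cast; ring, h2] at this
  simp at this

lemma my_cnt_eq (n : ℕ) [NeZero n] (hn : 3 ≤ n) (U : Finset (ZMod n)) (w : ZMod n) :
    Nat.card {v : ZMod n // v ∈ U ∧ (myCycle n).Adj w v} = ({w - 1, w + 1} ∩ U).card := by
  classical
  rw [Nat.card_eq_fintype_card, Fintype.card_subtype]
  congr 1
  ext v
  simp only [mem_filter, mem_univ, true_and, mem_inter, mem_insert, mem_singleton]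
  rw [myAdj_iff n hn]
  constructor
  · rintro ⟨hv, h | h⟩
    · exact ⟨Or.inr h.symm, hv⟩
    · exact ⟨Or.inl (by rw [← h]; ring), hv⟩
  · rintro ⟨h | h, hv⟩
    · exact ⟨hv, Or.inr (by rw [h]; ring)⟩
    · exact ⟨hv, Or.inl h.symm⟩

lemma my_cnt_one_iff (n : ℕ) [NeZero n] (hn : 3 ≤ n) (U : Finset (ZMod n)) (w : ZMod n) :
    Nat.card {v : ZMod n // v ∈ U ∧ (myCycle n).Adj w v} = 1 ↔
      ((w - 1 ∈ U ∧ w + 1 ∉ U) ∨ (w - 1 ∉ U ∧ w + 1 ∈ U)) := by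
  classical
  rw [my_cnt_eq n hn]
  have hne := my_sub_ne_add n hn w
  by_cases h1 : w - 1 ∈ U <;> by_cases h2 : w + 1 ∈ U <;>
    simp [insert_inter_of_mem, insert_inter_of_notMem, singleton_inter_of_mem,
      singleton_inter_of_notMem, h1, h2, card_insert_of_notMem, hne]

lemma my_nonbr_iff (n : ℕ) [NeZero n] (hn : 3 ≤ n) (U : Finset (ZMod n)) (w : ZMod n) :
    (∀ v ∈ U, ¬ (myCycle n).Adj w v) ↔ (w - 1 ∉ U ∧ w + 1 ∉ U) := by
  constructor
  · intro h
    exact ⟨fun hm => h _ hm ((myAdj_iff n hn _ _).mpr (Or.inr (by ring))),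
           fun hm => h _ hm ((myAdj_iff n hn _ _).mpr (Or.inl rfl))⟩
  · rintro ⟨h1, h2⟩ v hv hadj
    rcases (myAdj_iff n hn _ _).mp hadj with h | h
    · exact h2 (h ▸ hv)
    · exact h1 ((eq_sub_of_add_eq h) ▸ hv)

/-- The key predicate: `w` is an external or self private neighbor. -/
def myGood (n : ℕ) (U : Finset (ZMod n)) (w : ZMod n) : Prop :=
  (w ∉ U ∧ ((w - 1 ∈ U ∧ w + 1 ∉ U) ∨ (w - 1 ∉ U ∧ w + 1 ∈ U))) ∨
  (w ∈ U ∧ (w - 1 ∉ U ∧ w + 1 ∉ U))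

instance (n : ℕ) (U : Finset (ZMod n)) : DecidablePred (myGood n U) := fun w => by
  unfold myGood; infer_instance

lemma my_total_eq (n : ℕ) [NeZero n] (hn : 3 ≤ n) (U : Finset (ZMod n)) :
    extCount (myCycle n) U + selfCount (myCycle n) U =
      (univ.filter (myGood n U)).card := by
  classical
  rw [extCount, selfCount, Nat.card_eq_fintype_card, Fintype.card_subtype,
    Nat.card_eq_fintype_card, Fintype.card_subtype]
  rw [← card_union_of_disjoint (by
    simp only [disjoint_left, mem_filter, mem_univ, true_and]
    rintro a ⟨ha, -⟩ ⟨ha', -⟩; exact ha ha')]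
  congr 1
  rw [← filter_or]
  apply filter_congr
  intro w _
  rw [my_cnt_one_iff n hn, my_nonbr_iff n hn]
  rfl

lemma val_add_one' (n : ℕ) [NeZero n] (hn : 3 ≤ n) (w : ZMod n) :
    (w + 1).val = if w.val = n - 1 then 0 else w.val + 1 := by
  haveI : Fact (1 < n) := ⟨by omega⟩
  rw [ZMod.val_add, ZMod.val_one]
  have := ZMod.val_lt w
  split <;> rename_i h
  · rw [h, show n - 1 + 1 = n by omega, Nat.mod_self]
  · exact Nat.mod_eq_of_lt (by omega)

lemma val_sub_one' (n : ℕ) [NeZero n] (hn : 3 ≤ n) (w : ZMod n) :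
    (w - 1).val = if w.val = 0 then n - 1 else w.val - 1 := by
  haveI : Fact (1 < n) := ⟨by omega⟩
  have key := val_add_one' n hn (w - 1)
  rw [sub_add_cancel] at key
  have h1 := ZMod.val_lt (w - 1)
  have h2 := ZMod.val_lt w
  split <;> rename_i h
  · have hw : w = 0 := by rwa [← ZMod.val_eq_zero]
    subst hw
    split at key <;> omega
  · split at key <;> omega

/-- Double counting: if every vertex is a private neighbor, then `3 ∣ n`. -/
lemma my_upper (n : ℕ) [NeZero n] (hn : 3 ≤ n) (U : Finset (ZMod n))
    (hall : ∀ w : ZMod n, myGood n U w) : n % 3 = 0 := by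
  classical
  have hU : (∑ w : ZMod n, if w ∈ U then (1:ℕ) else 0) = U.card := by
    rw [Finset.sum_ite_mem, univ_inter, Finset.sum_const, smul_eq_mul, mul_one]
  have key : ∑ w : ZMod n, ((if w - 1 ∈ U then 1 else 0) + (if w + 1 ∈ U then 1 else 0))
      = 2 * U.card := by
    rw [Finset.sum_add_distrib]
    have e1 : (∑ w : ZMod n, if w - 1 ∈ U then (1:ℕ) else 0)
        = ∑ w : ZMod n, if w ∈ U then (1:ℕ) else 0 :=
      Fintype.sum_equiv (Equiv.subRight (1 : ZMod n)) _ _ (fun w => rfl)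
    have e2 : (∑ w : ZMod n, if w + 1 ∈ U then (1:ℕ) else 0)
        = ∑ w : ZMod n, if w ∈ U then (1:ℕ) else 0 :=
      Fintype.sum_equiv (Equiv.addRight (1 : ZMod n)) _ _ (fun w => rfl)
    rw [e1, e2, hU]; ring
  have key2 : ∑ w : ZMod n, ((if w - 1 ∈ U then 1 else 0) + (if w + 1 ∈ U then 1 else 0))
      = ∑ w : ZMod n, (if w ∈ U then 0 else 1) := by
    apply Finset.sum_congr rfl
    intro w _
    rcases hall w with ⟨hw, (⟨h1, h2⟩ | ⟨h1, h2⟩)⟩ | ⟨hw, h1, h2⟩ <;>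
      simp [hw, h1, h2]
  have key3 : (∑ w : ZMod n, if w ∈ U then (0:ℕ) else 1) + U.card = n := by
    rw [← hU, ← Finset.sum_add_distrib]
    rw [Finset.sum_congr rfl (fun w _ => by split <;> rfl : ∀ w ∈ univ,
      ((if w ∈ U then (0:ℕ) else 1) + (if w ∈ U then (1:ℕ) else 0)) = 1)]
    simp [ZMod.card]
  have hle : U.card ≤ n := by
    have := Finset.card_le_card (Finset.subset_univ U)
    simpa [ZMod.card] using this
  omega

/-- The optimal set: multiples of 3 (dropping `n-1` when `n ≡ 1 [MOD 3]`). -/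
def myU (n : ℕ) [NeZero n] : Finset (ZMod n) :=
  univ.filter (fun x => x.val % 3 = 0 ∧ (n % 3 = 1 → x.val ≠ n - 1))

lemma mem_myU (n : ℕ) [NeZero n] (x : ZMod n) :
    x ∈ myU n ↔ (x.val % 3 = 0 ∧ (n % 3 = 1 → x.val ≠ n - 1)) := by
  simp [myU]

lemma myGood_myU (n : ℕ) [NeZero n] (hn : 3 ≤ n) (w : ZMod n) :
    myGood n (myU n) w ↔
      (n % 3 = 0 ∨ (n % 3 = 1 ∧ w.val ≠ n - 2) ∨ (n % 3 = 2 ∧ w.val ≠ n - 1)) := by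
  have hv := ZMod.val_lt w
  unfold myGood
  rw [mem_myU, mem_myU, mem_myU, val_sub_one' n hn, val_add_one' n hn]
  split_ifs <;> omega

lemma card_good_myU (n : ℕ) [NeZero n] (hn : 3 ≤ n) :
    (univ.filter (myGood n (myU n))).card = if n % 3 = 0 then n else n - 1 := by
  classical
  by_cases h0 : n % 3 = 0
  · rw [if_pos h0, filter_true_of_mem (fun w _ => (myGood_myU n hn w).mpr (Or.inl h0)),
      card_univ, ZMod.card]
  · rw [if_neg h0]
    set c : ℕ := if n % 3 = 1 then n - 2 else n - 1 with hc
    have hclt : c < n := by rw [hc]; split <;> omega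
    have hval : ((c : ZMod n)).val = c := ZMod.val_cast_of_lt hclt
    have hiff : ∀ w : ZMod n, myGood n (myU n) w ↔ w ≠ (c : ZMod n) := by
      intro w
      rw [myGood_myU n hn]
      have : w = (c : ZMod n) ↔ w.val = c := by
        constructor
        · rintro rfl; exact hval
        · intro h; apply ZMod.val_injective; rw [hval]; exact h
      have h3 := Nat.mod_lt n (show 0 < 3 by norm_num)
      simp only [Ne, this]
      rw [hc]
      split <;> omega
    rw [filter_congr (fun w _ => hiff w), filter_ne', card_erase_of_mem (mem_univ _),
      card_univ, ZMod.card]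

end Aux

theorem ESPN_cycle (n : ℕ) [NeZero n] (hn : 3 ≤ n) :
    ESPN (myCycle n) = if n % 3 = 0 then n else n - 1 := by
  classical
  apply le_antisymm
  · apply Finset.sup_le
    intro U _
    rw [my_total_eq n hn U]
    by_cases h0 : n % 3 = 0
    · rw [if_pos h0]
      calc (univ.filter (myGood n U)).card ≤ (univ : Finset (ZMod n)).card :=
            card_filter_le _ _
        _ = n := by rw [card_univ, ZMod.card]
    · rw [if_neg h0]
      by_contra hcon
      push_neg at hcon
      have hle : (univ.filter (myGood n U)).card ≤ n := by
        calc (univ.filter (myGood n U)).card ≤ (univ : Finset (ZMod n)).card :=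
              card_filter_le _ _
          _ = n := by rw [card_univ, ZMod.card]
      have hcard : (univ.filter (myGood n U)).card = n := by omega
      have huniv : univ.filter (myGood n U) = univ := by
        apply Finset.eq_univ_of_card
        rw [hcard, ZMod.card]
      have hall : ∀ w : ZMod n, myGood n U w := by
        intro w
        have hw : w ∈ univ := mem_univ w
        rw [← huniv] at hw
        exact (mem_filter.mp hw).2
      exact h0 (my_upper n hn U hall)
  · have := Finset.le_sup (f := fun U => extCount (myCycle n) U + selfCount (myCycle n) U)
      (mem_univ (myU n))
    rwa [my_total_eq n hn (myU n), card_good_myU n hn] at this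
end

section
/- For the complete bipartite graph K_{p,q} with 1 ≤ p ≤ q, EPN(K_{p,q}) = q if p = 1, and EPN(K_{p,q}) = p + q − 2 if p ≥ 2. -/
open Finset

variable {V : Type*}

section Aux

variable {p q : ℕ}

private def inlEmb (p q : ℕ) : Fin p ↪ (Fin p ⊕ Fin q) := ⟨Sum.inl, Sum.inl_injective⟩
private def inrEmb (p q : ℕ) : Fin q ↪ (Fin p ⊕ Fin q) := ⟨Sum.inr, Sum.inr_injective⟩

lemma count_inl (U : Finset (Fin p ⊕ Fin q)) (x : Fin p) :
    Nat.card {v // v ∈ U ∧ (completeBipartiteGraph (Fin p) (Fin q)).Adj (Sum.inl x) v} =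
      U.toRight.card := by
  classical
  rw [Nat.card_eq_fintype_card, Fintype.card_subtype]
  have h : (univ.filter fun v => v ∈ U ∧
      (completeBipartiteGraph (Fin p) (Fin q)).Adj (Sum.inl x) v) =
      U.toRight.map (inrEmb p q) := by
    ext v
    cases v with
    | inl z => simp [inrEmb]
    | inr y => simp [inrEmb]
  rw [h, card_map]

lemma count_inr (U : Finset (Fin p ⊕ Fin q)) (y : Fin q) :
    Nat.card {v // v ∈ U ∧ (completeBipartiteGraph (Fin p) (Fin q)).Adj (Sum.inr y) v} =
      U.toLeft.card := by
  classical
  rw [Nat.card_eq_fintype_card, Fintype.card_subtype]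
  have h : (univ.filter fun v => v ∈ U ∧
      (completeBipartiteGraph (Fin p) (Fin q)).Adj (Sum.inr y) v) =
      U.toLeft.map (inlEmb p q) := by
    ext v
    cases v with
    | inl z => simp [inlEmb]
    | inr z => simp [inlEmb]
  rw [h, card_map]

lemma filter_disjSum' {α β : Type*} (s : Finset α) (t : Finset β) (P : α ⊕ β → Prop)
    [DecidablePred P] :
    (s.disjSum t).filter P =
      (s.filter (fun a => P (Sum.inl a))).disjSum (t.filter (fun b => P (Sum.inr b))) := by
  ext v; cases v <;> simp

lemma ext_eq (U : Finset (Fin p ⊕ Fin q)) :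
    extCount (completeBipartiteGraph (Fin p) (Fin q)) U =
      (if U.toRight.card = 1 then p - U.toLeft.card else 0) +
      (if U.toLeft.card = 1 then q - U.toRight.card else 0) := by
  classical
  unfold extCount
  rw [Nat.card_eq_fintype_card, Fintype.card_subtype]
  have h : ∀ w ∈ (univ : Finset (Fin p ⊕ Fin q)),
      ((w ∉ U ∧ Nat.card {v // v ∈ U ∧
          (completeBipartiteGraph (Fin p) (Fin q)).Adj w v} = 1) ↔
        (w ∉ U ∧ ((w.isLeft ∧ U.toRight.card = 1) ∨ (w.isRight ∧ U.toLeft.card = 1)))) := by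
    intro w _
    cases w with
    | inl x => rw [count_inl]; simp
    | inr y => rw [count_inr]; simp
  rw [filter_congr h, ← Finset.univ_disjSum_univ, filter_disjSum', Finset.card_disjSum]
  have hl : (univ.filter fun x : Fin p =>
      Sum.inl x ∉ U ∧ ((Sum.inl x : Fin p ⊕ Fin q).isLeft ∧ U.toRight.card = 1 ∨
        (Sum.inl x : Fin p ⊕ Fin q).isRight ∧ U.toLeft.card = 1)).card =
      if U.toRight.card = 1 then p - U.toLeft.card else 0 := by
    by_cases hb : U.toRight.card = 1
    · rw [if_pos hb]
      have : (univ.filter fun x : Fin p => Sum.inl x ∉ U ∧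
          ((Sum.inl x : Fin p ⊕ Fin q).isLeft ∧ U.toRight.card = 1 ∨
            (Sum.inl x : Fin p ⊕ Fin q).isRight ∧ U.toLeft.card = 1)) =
          univ \ U.toLeft := by
        ext x; simp [hb]
      rw [this, card_sdiff_of_subset (subset_univ _), card_univ, Fintype.card_fin]
    · rw [if_neg hb]
      rw [card_eq_zero]
      ext x; simp [hb]
  have hr : (univ.filter fun y : Fin q =>
      Sum.inr y ∉ U ∧ ((Sum.inr y : Fin p ⊕ Fin q).isLeft ∧ U.toRight.card = 1 ∨
        (Sum.inr y : Fin p ⊕ Fin q).isRight ∧ U.toLeft.card = 1)).card =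
      if U.toLeft.card = 1 then q - U.toRight.card else 0 := by
    by_cases ha : U.toLeft.card = 1
    · rw [if_pos ha]
      have : (univ.filter fun y : Fin q => Sum.inr y ∉ U ∧
          ((Sum.inr y : Fin p ⊕ Fin q).isLeft ∧ U.toRight.card = 1 ∨
            (Sum.inr y : Fin p ⊕ Fin q).isRight ∧ U.toLeft.card = 1)) =
          univ \ U.toRight := by
        ext y; simp [ha]
      rw [this, card_sdiff_of_subset (subset_univ _), card_univ, Fintype.card_fin]
    · rw [if_neg ha]
      rw [card_eq_zero]
      ext y; simp [ha]
  rw [hl, hr]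

end Aux

theorem EPN_completeBipartite (p q : ℕ) (hp : 1 ≤ p) (hpq : p ≤ q) :
    EPN (completeBipartiteGraph (Fin p) (Fin q)) =
      if p = 1 then q else p + q - 2 := by
  classical
  have hq : 1 ≤ q := hp.trans hpq
  apply le_antisymm
  · apply Finset.sup_le
    intro U _
    rw [ext_eq]
    have h1 : U.toLeft.card ≤ p := by
      simpa using card_le_card (subset_univ U.toLeft)
    have h2 : U.toRight.card ≤ q := by
      simpa using card_le_card (subset_univ U.toRight)
    split_ifs <;> omega
  · unfold EPN
    split_ifs with h1
    · -- p = 1 : witness U = {inl 0}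
      set W : Finset (Fin p ⊕ Fin q) := {Sum.inl ⟨0, hp⟩} with hW
      have hw := Finset.le_sup (f := fun U => extCount (completeBipartiteGraph (Fin p) (Fin q)) U)
        (mem_univ W)
      have e1 : W.toLeft = {(⟨0, hp⟩ : Fin p)} := by ext z; simp [hW]
      have e2 : W.toRight = (∅ : Finset (Fin q)) := by ext z; simp [hW]
      have hval : extCount (completeBipartiteGraph (Fin p) (Fin q)) W = q := by
        rw [ext_eq, e1, e2]; simp
      exact le_trans hval.symm.le hw
    · -- p ≥ 2 : witness U = {inl 0, inr 0}
      set W : Finset (Fin p ⊕ Fin q) := {Sum.inl ⟨0, hp⟩, Sum.inr ⟨0, hq⟩} with hW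
      have hw := Finset.le_sup (f := fun U => extCount (completeBipartiteGraph (Fin p) (Fin q)) U)
        (mem_univ W)
      have e1 : W.toLeft = {(⟨0, hp⟩ : Fin p)} := by ext z; simp [hW]
      have e2 : W.toRight = {(⟨0, hq⟩ : Fin q)} := by ext z; simp [hW]
      have hval : extCount (completeBipartiteGraph (Fin p) (Fin q)) W = (p - 1) + (q - 1) := by
        rw [ext_eq, e1, e2]; simp
      refine le_trans ?_ (le_trans hval.symm.le hw)
      omega
end

section
/- A graph G has an efficient dominating set (a set D with |N[x] ∩ D| = 1 for every vertex x) if and only if ESPN(G) = n(G), the order of G. -/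
open Finset

variable {V : Type*}

/-- `D` is an efficient dominating set: every closed neighborhood meets `D` exactly once. -/
def IsEfficientDominating (G : SimpleGraph V) (D : Finset V) : Prop :=
  ∀ x : V, Nat.card {d : V // d ∈ D ∧ (d = x ∨ G.Adj x d)} = 1

section Aux
set_option linter.unusedSectionVars false
variable [Fintype V] [DecidableEq V] (G : SimpleGraph V) (U : Finset V)

def Aset : Set V := {w | w ∉ U ∧ Nat.card {v : V // v ∈ U ∧ G.Adj w v} = 1}
def Bset : Set V := {w | w ∈ U ∧ ∀ v ∈ U, ¬ G.Adj w v}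

lemma ext_eq_s16 : extCount G U = (Aset G U).ncard := by
  rw [extCount, ← Nat.card_coe_set_eq]; rfl

lemma self_eq : selfCount G U = (Bset G U).ncard := by
  rw [selfCount, ← Nat.card_coe_set_eq]; rfl

lemma disjAB : Disjoint (Aset G U) (Bset G U) :=
  Set.disjoint_left.mpr fun _ hwA hwB => hwA.1 hwB.1

lemma sum_le : extCount G U + selfCount G U ≤ Fintype.card V := by
  rw [ext_eq_s16, self_eq, ← Set.ncard_union_eq (disjAB G U) (Set.toFinite _) (Set.toFinite _)]
  calc (Aset G U ∪ Bset G U).ncard ≤ (Set.univ : Set V).ncard :=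
        Set.ncard_le_ncard (Set.subset_univ _) (Set.toFinite _)
    _ = Fintype.card V := by simp [Set.ncard_univ, Nat.card_eq_fintype_card]

lemma eff_sum {D : Finset V} (hD : IsEfficientDominating G D) :
    extCount G D + selfCount G D = Fintype.card V := by
  have hcover : Aset G D ∪ Bset G D = Set.univ := by
    ext w
    simp only [Set.mem_union, Set.mem_univ, iff_true]
    by_cases hw : w ∈ D
    · right
      refine ⟨hw, fun v hv hadj => ?_⟩
      have h1 := hD w
      rw [Nat.card_eq_one_iff_unique] at h1
      have := h1.1.allEq ⟨w, hw, Or.inl rfl⟩ ⟨v, hv, Or.inr hadj⟩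
      exact G.ne_of_adj hadj (congrArg Subtype.val this)
    · left
      refine ⟨hw, ?_⟩
      have h1 := hD w
      rw [← h1]
      exact Nat.card_congr (Equiv.subtypeEquivRight fun d => by
        constructor
        · rintro ⟨hd, hadj⟩; exact ⟨hd, Or.inr hadj⟩
        · rintro ⟨hd, (rfl | hadj)⟩
          · exact absurd hd hw
          · exact ⟨hd, hadj⟩)
  rw [ext_eq_s16, self_eq, ← Set.ncard_union_eq (disjAB G D) (Set.toFinite _) (Set.toFinite _),
    hcover, Set.ncard_univ, Nat.card_eq_fintype_card]

lemma sum_eq_imp {D : Finset V}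
    (h : extCount G D + selfCount G D = Fintype.card V) : IsEfficientDominating G D := by
  have hA : Aset G D ⊆ (↑D : Set V)ᶜ := fun w hw => hw.1
  have hB : Bset G D ⊆ (↑D : Set V) := fun w hw => hw.1
  have hcard : (Aset G D).ncard + (Bset G D).ncard = Fintype.card V := by
    rw [← ext_eq_s16, ← self_eq]; exact h
  have hsplit : ((↑D : Set V)ᶜ).ncard + (↑D : Set V).ncard = Fintype.card V := by
    rw [← Set.ncard_union_eq disjoint_compl_left (Set.toFinite _) (Set.toFinite _),
      Set.compl_union_self, Set.ncard_univ, Nat.card_eq_fintype_card]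
  have hAle : (Aset G D).ncard ≤ ((↑D : Set V)ᶜ).ncard :=
    Set.ncard_le_ncard hA (Set.toFinite _)
  have hBle : (Bset G D).ncard ≤ ((↑D : Set V)).ncard :=
    Set.ncard_le_ncard hB (Set.toFinite _)
  have hAeq : Aset G D = (↑D : Set V)ᶜ :=
    Set.eq_of_subset_of_ncard_le hA (by omega) (Set.toFinite _)
  have hBeq : Bset G D = (↑D : Set V) :=
    Set.eq_of_subset_of_ncard_le hB (by omega) (Set.toFinite _)
  intro x
  by_cases hx : x ∈ D
  · have hxB : x ∈ Bset G D := hBeq.symm ▸ (by exact_mod_cast hx)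
    have : Nat.card {d : V // d ∈ D ∧ (d = x ∨ G.Adj x d)} = Nat.card {d : V // d = x} := by
      refine Nat.card_congr (Equiv.subtypeEquivRight fun d => ?_)
      constructor
      · rintro ⟨hd, (rfl | hadj)⟩
        · rfl
        · exact absurd hadj (hxB.2 d hd)
      · rintro rfl; exact ⟨hx, Or.inl rfl⟩
    rw [this, Nat.card_eq_fintype_card, Fintype.card_subtype_eq]
  · have hxA : x ∈ Aset G D := hAeq.symm ▸ (by simpa using hx)
    have := hxA.2
    rw [← this]
    refine Nat.card_congr (Equiv.subtypeEquivRight fun d => ?_)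
    constructor
    · rintro ⟨hd, (rfl | hadj)⟩
      · exact absurd hd hx
      · exact ⟨hd, hadj⟩
    · rintro ⟨hd, hadj⟩; exact ⟨hd, Or.inr hadj⟩

end Aux

theorem efficient_iff_ESPN_eq_card [Fintype V] [DecidableEq V] (G : SimpleGraph V) :
    (∃ D : Finset V, IsEfficientDominating G D) ↔ ESPN G = Fintype.card V := by
  constructor
  · rintro ⟨D, hD⟩
    refine le_antisymm (Finset.sup_le fun U _ => sum_le G U) ?_
    rw [← eff_sum G hD]
    exact Finset.le_sup (f := fun U => extCount G U + selfCount G U) (mem_univ D)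
  · intro h
    obtain ⟨U, -, hU⟩ := Finset.exists_mem_eq_sup (univ : Finset (Finset V))
      ⟨∅, mem_univ ∅⟩ (fun U => extCount G U + selfCount G U)
    exact ⟨U, sum_eq_imp G (by rw [← hU, ← ESPN, h])⟩
end
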